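/- For every measurable set S ⊆ ℝ^d, every x, δ ∈ ℝ^d, and every a ∈ ℝ: if μ_x(S) ≥ Φ(a), then μ_{x+δ}(S) ≥ Φ(a − ‖δ‖₂/σ). (Gaussian Neyman–Pearson shift lower bound: among all sets of a given Gaussian measure, the half-space orthogonal to the shift direction minimizes the measure under the shifted Gaussian.) -/

import Mathlib

open MeasureTheory ProbabilityTheory

/-- The standard normal cumulative distribution function `Φ`. -/
noncomputable def stdNormalCDF (a : ℝ) : ℝ :=
  ((gaussianReal 0 1) (Set.Iic a)).toReal

/-- The isotropic Gaussian measure `N(x, σ²I)` on `ℝ^d`, realized as the translate by `x`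
of the product of `d` copies of the real Gaussian `N(0, σ²)`. -/
noncomputable def isoGaussian (d : ℕ) (σ : ℝ) (x : EuclideanSpace ℝ (Fin d)) :
    Measure (EuclideanSpace ℝ (Fin d)) :=
  Measure.map (fun η => x + η)
    (Measure.map (MeasurableEquiv.toLp 2 (Fin d → ℝ))
      (Measure.pi fun _ : Fin d => gaussianReal 0 (σ ^ 2).toNNReal))

open Real
open scoped ENNReal NNReal RealInnerProductSpace

/-!
After the change of variables `z ↦ x + σ • z`, the two measures become the standard Gaussian `γ`
and its translate by `δ' = σ⁻¹ • δ`. By the Cameron–Martin formula this translate has density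
`exp (⟪δ', z⟫ - ‖δ'‖² / 2)` with respect to `γ`, an increasing function of `⟪δ', z⟫`. Hence
(Neyman–Pearson), among the sets of `γ`-measure at least `Φ(a)`, the translate gives the least mass
to the half-space `{z | ⟪δ', z⟫ ≤ a ‖δ'‖}`; as `⟪δ' / ‖δ'‖, Z⟫` is standard normal, its measures
under `γ` and the translate are `Φ(a)` and `Φ(a - ‖δ'‖)`.
-/

-- The Neyman–Pearson lemma, with `H` a sublevel set of the likelihood ratio `g`.
theorem withDensity_apply_le_of_sublevel {α : Type*} [MeasurableSpace α] (μ : Measure α)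
    [IsFiniteMeasure μ] {g : α → ℝ≥0∞} (hg : Measurable g) (k : ℝ≥0∞) {S H : Set α}
    (hS : MeasurableSet S) (hH : MeasurableSet H)
    (hg_le : ∀ y ∈ H, g y ≤ k) (hg_ge : ∀ y ∉ H, k ≤ g y) (hμ : μ H ≤ μ S) :
    μ.withDensity g H ≤ μ.withDensity g S := by
  have hdiff : μ (H \ S) ≤ μ (S \ H) := by
    rw [← measure_inter_add_sdiff H hS, ← measure_inter_add_sdiff S hH, Set.inter_comm] at hμ
    exact (ENNReal.add_le_add_iff_left (measure_ne_top μ _)).mp hμ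
  have hdiff' : μ.withDensity g (H \ S) ≤ μ.withDensity g (S \ H) := by
    rw [withDensity_apply _ (hH.diff hS), withDensity_apply _ (hS.diff hH)]
    calc ∫⁻ y in H \ S, g y ∂μ ≤ ∫⁻ _ in H \ S, k ∂μ :=
          setLIntegral_mono measurable_const fun y hy => hg_le y hy.1
      _ = k * μ (H \ S) := setLIntegral_const _ _
      _ ≤ k * μ (S \ H) := by gcongr
      _ = ∫⁻ _ in S \ H, k ∂μ := (setLIntegral_const _ _).symm
      _ ≤ ∫⁻ y in S \ H, g y ∂μ := setLIntegral_mono hg fun y hy => hg_ge y hy.2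
  rw [← measure_inter_add_sdiff H hS, ← measure_inter_add_sdiff S hH, Set.inter_comm]
  gcongr

theorem MeasurableEquiv.map_withDensity_comp {α β : Type*} [MeasurableSpace α]
    [MeasurableSpace β] (e : α ≃ᵐ β) (μ : Measure α) (g : β → ℝ≥0∞) :
    (μ.withDensity (g ∘ e)).map e = (μ.map e).withDensity g := by
  ext s hs
  rw [e.map_apply, withDensity_apply _ hs, withDensity_apply _ (e.measurable hs),
    e.restrict_map, lintegral_map_equiv]
  rfl

theorem MeasureTheory.Measure.pi_withDensity {ι : Type*} [Fintype ι] {α : ι → Type*}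
    [∀ i, MeasurableSpace (α i)] (μ : ∀ i, Measure (α i)) [∀ i, IsProbabilityMeasure (μ i)]
    {f : ∀ i, α i → ℝ≥0∞} (hf : ∀ i, Measurable (f i))
    [∀ i, SigmaFinite ((μ i).withDensity (f i))] :
    Measure.pi (fun i => (μ i).withDensity (f i))
      = (Measure.pi μ).withDensity (fun y => ∏ i, f i (y i)) := by
  refine Measure.pi_eq fun s hs => ?_
  have hind : (Set.univ.pi s).indicator (fun y => ∏ i, f i (y i))
      = fun y => ∏ i, (s i).indicator (f i) (y i) := by
    ext y
    classical
    simp only [Set.indicator_apply, Set.mem_univ_pi, Finset.prod_ite_zero, Finset.mem_univ,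
      true_implies]
  rw [withDensity_apply _ (.univ_pi hs), ← lintegral_indicator (.univ_pi hs), hind,
    lintegral_prod_eq_prod_lintegral_of_indepFun _ _
      (iIndepFun_pi fun i => ((hf i).indicator (hs i)).aemeasurable)
      fun i => ((hf i).indicator (hs i)).comp (measurable_pi_apply i)]
  refine Finset.prod_congr rfl fun i _ => ?_
  rw [withDensity_apply _ (hs i), ← lintegral_indicator (hs i),
    ← lintegral_map ((hf i).indicator (hs i)) (measurable_pi_apply i),
    (measurePreserving_eval μ i).map_eq]

theorem gaussianReal_map_const_add_eq_withDensity (m : ℝ) {v : ℝ≥0} (hv : v ≠ 0) (c : ℝ) :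
    (gaussianReal m v).map (c + ·)
      = (gaussianReal m v).withDensity
          (fun t => ENNReal.ofReal (exp ((c * (t - m) - c ^ 2 / 2) / v))) := by
  rw [gaussianReal_map_const_add, gaussianReal_of_var_ne_zero _ hv,
    gaussianReal_of_var_ne_zero _ hv,
    ← withDensity_mul _ (measurable_gaussianPDF _ _) (by fun_prop)]
  congr 1
  ext t
  rw [Pi.mul_apply, gaussianPDF, gaussianPDF, ← ENNReal.ofReal_mul (gaussianPDFReal_nonneg _ _ _),
    gaussianPDFReal, gaussianPDFReal, mul_assoc _ (exp _), ← exp_add]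
  congr 3
  have : (v : ℝ) ≠ 0 := by exact_mod_cast hv
  field_simp
  ring

theorem stdGaussian_map_const_add {ι : Type*} [Fintype ι] (δ : EuclideanSpace ℝ ι) :
    (stdGaussian (EuclideanSpace ℝ ι)).map (δ + ·)
      = (stdGaussian _).withDensity (fun z => ENNReal.ofReal (exp (⟪δ, z⟫ - ‖δ‖ ^ 2 / 2))) := by
  set P := Measure.pi fun _ : ι => gaussianReal 0 1
  have hshift : (δ + ·) ∘ WithLp.toLp 2 = WithLp.toLp 2 ∘ fun (y : ι → ℝ) i => δ i + y i := rfl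
  have hdens : (fun z => ENNReal.ofReal (exp (⟪δ, z⟫ - ‖δ‖ ^ 2 / 2))) ∘ MeasurableEquiv.toLp 2 _
      = fun y => ∏ i, ENNReal.ofReal (exp (δ i * y i - δ i ^ 2 / 2)) := by
    ext y
    rw [← ENNReal.ofReal_prod_of_nonneg fun i _ => (exp_pos _).le, ← exp_sum]
    simp [PiLp.inner_apply, EuclideanSpace.real_norm_sq_eq, Finset.sum_div, mul_comm]
  calc (stdGaussian (EuclideanSpace ℝ ι)).map (δ + ·)
      = (P.map fun y i => δ i + y i).map (WithLp.toLp 2) := by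
        rw [← map_pi_eq_stdGaussian, Measure.map_map, Measure.map_map, hshift] <;> fun_prop
    _ = (Measure.pi fun i => (gaussianReal 0 1).map (δ i + ·)).map (WithLp.toLp 2) := by
        rw [Measure.pi_map_pi fun i => by fun_prop]
    _ = (P.withDensity fun y => ∏ i, ENNReal.ofReal (exp (δ i * y i - δ i ^ 2 / 2))).map
          (MeasurableEquiv.toLp 2 _) := by
        simp_rw [gaussianReal_map_const_add_eq_withDensity 0 one_ne_zero, sub_zero,
          NNReal.coe_one, div_one]
        rw [Measure.pi_withDensity _ fun i => by fun_prop, MeasurableEquiv.coe_toLp]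
    _ = _ := by
        rw [← hdens, MeasurableEquiv.map_withDensity_comp, MeasurableEquiv.coe_toLp,
          map_pi_eq_stdGaussian]

theorem stdGaussian_map_inner {E : Type*} [NormedAddCommGroup E] [InnerProductSpace ℝ E]
    [FiniteDimensional ℝ E] [MeasurableSpace E] [BorelSpace E] (u : E) :
    (stdGaussian E).map (⟪u, ·⟫) = gaussianReal 0 (‖u‖ ^ 2).toNNReal := by
  have h := IsGaussian.map_eq_gaussianReal (μ := stdGaussian E) (innerSL ℝ u)
  rwa [integral_strongDual_stdGaussian, variance_dual_stdGaussian, innerSL_apply_norm] at h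

theorem gaussianReal_Iic_sub_norm_le_stdGaussian_map_add {ι : Type*} [Fintype ι]
    (δ : EuclideanSpace ℝ ι) {T : Set (EuclideanSpace ℝ ι)} (hT : MeasurableSet T) {a : ℝ}
    (h : gaussianReal 0 1 (Set.Iic a) ≤ stdGaussian _ T) :
    gaussianReal 0 1 (Set.Iic (a - ‖δ‖)) ≤ (stdGaussian _).map (δ + ·) T := by
  rcases eq_or_ne δ 0 with rfl | hδ
  · simpa using h
  set r := ‖δ‖
  have hr : r ≠ 0 := norm_ne_zero_iff.2 hδ
  set u := r⁻¹ • δ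
  have hu : ‖u‖ = 1 := norm_smul_inv_norm hδ
  have hδu : δ = r • u := (smul_inv_smul₀ hr δ).symm
  have hlaw : (stdGaussian _).map (⟪u, ·⟫) = gaussianReal 0 1 := by
    simp [stdGaussian_map_inner, hu]
  set H := {z : EuclideanSpace ℝ ι | ⟪u, z⟫ ≤ a}
  have hH : MeasurableSet H := measurableSet_le (by fun_prop) measurable_const
  have hγH : stdGaussian _ H = gaussianReal 0 1 (Set.Iic a) := by
    rw [← hlaw, Measure.map_apply (by fun_prop) measurableSet_Iic]
    rfl
  have hγH' : (stdGaussian _).map (δ + ·) H = gaussianReal 0 1 (Set.Iic (a - r)) := by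
    rw [← hlaw, Measure.map_apply (by fun_prop) hH,
      Measure.map_apply (by fun_prop) measurableSet_Iic]
    congr 1
    ext z
    simp [H, hδu, inner_add_right, real_inner_smul_right, hu, le_sub_iff_add_le']
  rw [← hγH', stdGaussian_map_const_add]
  refine withDensity_apply_le_of_sublevel _ (by fun_prop)
    (ENNReal.ofReal (exp (r * a - r ^ 2 / 2))) hT hH (fun z hz => ?_) (fun z hz => ?_) (hγH ▸ h)
  all_goals
    gcongr
    rw [hδu, real_inner_smul_left]
  · exact mul_le_mul_of_nonneg_left hz (norm_nonneg δ)
  · exact mul_le_mul_of_nonneg_left (le_of_not_ge hz) (norm_nonneg δ)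

theorem map_pi_gaussianReal_eq_map_smul_stdGaussian {ι : Type*} [Fintype ι] (σ : ℝ) :
    (Measure.pi fun _ : ι => gaussianReal 0 (σ ^ 2).toNNReal).map (WithLp.toLp 2)
      = (stdGaussian (EuclideanSpace ℝ ι)).map (σ • ·) := by
  have hσ : gaussianReal 0 (σ ^ 2).toNNReal = (gaussianReal 0 1).map (σ * ·) := by
    rw [gaussianReal_map_const_mul, mul_zero, mul_one]
    congr
    ext
    simp [sq_nonneg]
  simp_rw [hσ]
  rw [← Measure.pi_map_pi fun _ => by fun_prop, ← map_pi_eq_stdGaussian, Measure.map_map,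
    Measure.map_map] <;> first | rfl | fun_prop

theorem isoGaussian_eq_map_stdGaussian (d : ℕ) (σ : ℝ) (x : EuclideanSpace ℝ (Fin d)) :
    isoGaussian d σ x = (stdGaussian _).map (fun z => x + σ • z) := by
  rw [isoGaussian, MeasurableEquiv.coe_toLp, map_pi_gaussianReal_eq_map_smul_stdGaussian,
    Measure.map_map] <;> first | rfl | fun_prop

theorem gaussian_shift_lower_bound_general
    (d : ℕ) (σ : ℝ) (hσ : 0 < σ)
    (S : Set (EuclideanSpace ℝ (Fin d))) (hS : MeasurableSet S)
    (x δ : EuclideanSpace ℝ (Fin d)) (a : ℝ)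
    (h : stdNormalCDF a ≤ (isoGaussian d σ x S).toReal) :
    stdNormalCDF (a - ‖δ‖ / σ) ≤ (isoGaussian d σ (x + δ) S).toReal := by
  set T := (fun z => x + σ • z) ⁻¹' S
  have hT : MeasurableSet T := (by fun_prop : Measurable fun z => x + σ • z) hS
  have hxδ : (fun z => x + δ + σ • z) ⁻¹' S = (σ⁻¹ • δ + ·) ⁻¹' T := by
    ext z
    simp [T, smul_add, smul_inv_smul₀ hσ.ne', add_assoc]
  have hnorm : ‖σ⁻¹ • δ‖ = ‖δ‖ / σ := by
    rw [norm_smul, norm_inv, Real.norm_of_nonneg hσ.le, inv_mul_eq_div]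
  rw [stdNormalCDF, isoGaussian_eq_map_stdGaussian, Measure.map_apply (by fun_prop) hS,
    ENNReal.toReal_le_toReal (measure_ne_top _ _) (measure_ne_top _ _)] at h
  rw [stdNormalCDF, isoGaussian_eq_map_stdGaussian, Measure.map_apply (by fun_prop) hS, hxδ,
    ← Measure.map_apply (by fun_prop) hT, ← hnorm,
    ENNReal.toReal_le_toReal (measure_ne_top _ _) (measure_ne_top _ _)]
  exact gaussianReal_Iic_sub_norm_le_stdGaussian_map_add _ hT h

/-- Gaussian Neyman–Pearson shift lower bound: if `μ_x(S) ≥ Φ(a)` then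
`μ_{x+δ}(S) ≥ Φ(a − ‖δ‖₂/σ)`. -/
theorem gaussian_shift_lower_bound
    (d : ℕ) (hd : 1 ≤ d) (σ : ℝ) (hσ : 0 < σ)
    (S : Set (EuclideanSpace ℝ (Fin d))) (hS : MeasurableSet S)
    (x δ : EuclideanSpace ℝ (Fin d)) (a : ℝ)
    (h : stdNormalCDF a ≤ (isoGaussian d σ x S).toReal) :
    stdNormalCDF (a - ‖δ‖ / σ) ≤ (isoGaussian d σ (x + δ) S).toReal :=
  gaussian_shift_lower_bound_general d σ hσ S hS x δ a h
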